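/- For all ℓ ≥ 0 and all N, M, the identity ℓ(ℓ+1) A_ℓ(N,M) = N·M·(B_ℓ(N+1,M+1) - B_ℓ(N,M)) holds. -/

import Mathlib

open Finset

/-- Rising factorial (Pochhammer symbol) `(x)_n = x(x+1)⋯(x+n-1)`. -/
noncomputable def poch (x : ℝ) (n : ℕ) : ℝ := (ascPochhammer ℝ n).eval x

/-- The LUE coefficients `A_ℓ(N,M)`. -/
noncomputable def A (N M : ℝ) : ℕ → ℝ
  | 0 => N
  | (ℓ + 1) => (1 / ((ℓ : ℝ) + 1)) * ∑ j ∈ range (ℓ + 1),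
      (-1 : ℝ) ^ j * poch (N - j) (ℓ + 1) * poch (M - j) (ℓ + 1) /
        ((j.factorial : ℝ) * ((ℓ - j).factorial : ℝ))

/-- The LUE coefficients `B_ℓ(N,M)`. -/
noncomputable def B (N M : ℝ) (ℓ : ℕ) : ℝ :=
  ∑ j ∈ range (ℓ + 1),
    (-1 : ℝ) ^ j * poch (N - j) ℓ * poch (M - j) ℓ /
      ((j.factorial : ℝ) * ((ℓ - j).factorial : ℝ))

/-!
Write `b_j(N,M)` for the `j`-th summand of `B_ℓ(N,M)`. The factor `ℓ - j` turns `1/(ℓ-j)!` into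
`1/(ℓ-1-j)!`, so `ℓ A_ℓ = ∑_{j<ℓ} a_j` with `a_j = (ℓ - j) b_j(N,M)`, and `a_ℓ = 0`. Termwise, the
difference `N M (b_j(N+1,M+1) - b_j(N,M))` has the Gosper-type decomposition
`(N+M+ℓ-j) a_j + j (N+M-j) b_j(N+1,M+1)`, and `j b_j(N+1,M+1) = -a_{j-1}`. Summing over `j`, the
second parts shift by one index and combine with the first ones to `(ℓ+1) ∑ a_j`.
-/

noncomputable def bTerm (N M : ℝ) (ℓ j : ℕ) : ℝ :=
  (-1 : ℝ) ^ j * poch (N - j) ℓ * poch (M - j) ℓ / ((j.factorial : ℝ) * ((ℓ - j).factorial : ℝ))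

lemma B_eq_sum_bTerm (N M : ℝ) (ℓ : ℕ) : B N M ℓ = ∑ j ∈ range (ℓ + 1), bTerm N M ℓ j := rfl

lemma poch_succ_left (x : ℝ) (n : ℕ) : poch x (n + 1) = x * poch (x + 1) n := by
  simp [poch, ascPochhammer_succ_left, Polynomial.eval_comp]

lemma poch_succ_right (x : ℝ) (n : ℕ) : poch x (n + 1) = poch x n * (x + n) :=
  ascPochhammer_succ_eval n x

lemma poch_gosper (x y t : ℝ) (ℓ : ℕ) :
    (x + t) * (y + t) * (poch (x + 1) ℓ * poch (y + 1) ℓ - poch x ℓ * poch y ℓ) =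
      (x + y + t + ℓ) * (ℓ - t) * (poch x ℓ * poch y ℓ) +
        t * (x + y + t) * (poch (x + 1) ℓ * poch (y + 1) ℓ) := by
  cases ℓ with
  | zero => simp only [poch, ascPochhammer_zero, Polynomial.eval_one]; push_cast; ring
  | succ n =>
    rw [poch_succ_left x, poch_succ_left y, poch_succ_right (x + 1), poch_succ_right (y + 1)]
    push_cast
    ring

lemma bTerm_gosper (N M : ℝ) (ℓ j : ℕ) :
    N * M * (bTerm (N + 1) (M + 1) ℓ j - bTerm N M ℓ j) =
      (N + M + ℓ - j) * ((ℓ - j) * bTerm N M ℓ j) +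
        j * (N + M - j) * bTerm (N + 1) (M + 1) ℓ j := by
  have h := poch_gosper (N - j) (M - j) j ℓ
  simp only [sub_add_cancel, sub_add_eq_add_sub] at h
  simp only [bTerm, div_eq_mul_inv]
  linear_combination (-1 : ℝ) ^ j * ((j.factorial : ℝ) * ((ℓ - j).factorial : ℝ))⁻¹ * h

lemma succ_mul_bTerm_succ (N M : ℝ) {ℓ j : ℕ} (hj : j < ℓ) :
    ((j : ℝ) + 1) * bTerm (N + 1) (M + 1) ℓ (j + 1) = -((ℓ - j) * bTerm N M ℓ j) := by
  obtain ⟨k, rfl⟩ := Nat.exists_eq_add_of_lt hj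
  simp only [bTerm, show j + k + 1 - (j + 1) = k by omega, show j + k + 1 - j = k + 1 by omega,
    Nat.factorial_succ]
  push_cast
  rw [show N + 1 - ((j : ℝ) + 1) = N - j by ring, show M + 1 - ((j : ℝ) + 1) = M - j by ring]
  field_simp
  ring

lemma sub_mul_bTerm_succ (N M : ℝ) {n j : ℕ} (hj : j ≤ n) :
    ((n : ℝ) + 1 - j) * bTerm N M (n + 1) j =
      (-1 : ℝ) ^ j * poch (N - j) (n + 1) * poch (M - j) (n + 1) /
        ((j.factorial : ℝ) * ((n - j).factorial : ℝ)) := by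
  obtain ⟨k, rfl⟩ := Nat.exists_eq_add_of_le hj
  simp only [bTerm, show j + k + 1 - j = k + 1 by omega, show j + k - j = k by omega,
    Nat.factorial_succ]
  push_cast
  field_simp
  ring

lemma mul_B_shift_sub (N M : ℝ) (ℓ : ℕ) :
    N * M * (B (N + 1) (M + 1) ℓ - B N M ℓ) =
      ((ℓ : ℝ) + 1) * ∑ j ∈ range ℓ, (ℓ - j) * bTerm N M ℓ j := by
  rw [B_eq_sum_bTerm, B_eq_sum_bTerm, ← sum_sub_distrib, mul_sum]
  simp only [bTerm_gosper, sum_add_distrib]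
  rw [sum_range_succ, sum_range_succ', mul_sum]
  simp only [sub_self, zero_mul, mul_zero, add_zero, CharP.cast_eq_zero]
  rw [← sum_add_distrib]
  refine sum_congr rfl fun j hj => ?_
  have hshift := succ_mul_bTerm_succ N M (mem_range.mp hj)
  push_cast
  linear_combination (N + M - ((j : ℝ) + 1)) * hshift

lemma mul_A_succ (N M : ℝ) (n : ℕ) :
    ((n : ℝ) + 1) * A N M (n + 1) =
      ∑ j ∈ range (n + 1), ((n : ℝ) + 1 - j) * bTerm N M (n + 1) j := by
  rw [A, ← mul_assoc, mul_one_div_cancel (by positivity), one_mul]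
  exact sum_congr rfl fun j hj =>
    (sub_mul_bTerm_succ N M (Nat.lt_succ_iff.mp (mem_range.mp hj))).symm

theorem A_vs_B (N M : ℝ) (ℓ : ℕ) :
    (ℓ : ℝ) * ((ℓ : ℝ) + 1) * A N M ℓ = N * M * (B (N + 1) (M + 1) ℓ - B N M ℓ) := by
  rw [mul_B_shift_sub]
  cases ℓ with
  | zero => simp
  | succ n =>
    push_cast
    rw [← mul_A_succ]
    ring
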